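/- Let G1 be a connected δ1-regular graph on n vertices with δ1 ≥ 4 and G2 be a connected δ2-regular graph on δ1 vertices, and write κ1 = κ(G1) and λi = λ(Gi) for i = 1,2. If G2 is λ'-optimal and either κ1 ≥ λ1−λ2+1 or κ1 ≥ λ2+1, then λ'(G1®G2) = min{λ1, 2δ2}. -/

import Mathlib

open SimpleGraph

section Defs

variable {V : Type*}

/-- The set of edges of `G` with one endpoint in `X` and the other outside `X`. -/
def edgeBoundary (G : SimpleGraph V) (X : Set V) : Set (Sym2 V) :=
  {e | e ∈ G.edgeSet ∧ ∃ u ∈ X, ∃ v ∈ Xᶜ, e = s(u, v)}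

/-- The edge-connectivity `λ(G)`: the minimum number of edges whose removal disconnects `G`. -/
noncomputable def edgeConn (G : SimpleGraph V) : ℕ :=
  sInf {k | ∃ F : Set (Sym2 V), F ⊆ G.edgeSet ∧ F.ncard = k ∧ ¬(G.deleteEdges F).Connected}

/-- `F` is a restricted edge-cut of `G`: removing `F` disconnects `G` and leaves no
isolated vertices. -/
def IsRestrictedEdgeCut (G : SimpleGraph V) (F : Set (Sym2 V)) : Prop :=
  F ⊆ G.edgeSet ∧ ¬(G.deleteEdges F).Connected ∧ ∀ v : V, ∃ w : V, (G.deleteEdges F).Adj v w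

/-- The restricted edge-connectivity `λ'(G)`. -/
noncomputable def restrictedEdgeConn (G : SimpleGraph V) : ℕ :=
  sInf {k | ∃ F : Set (Sym2 V), IsRestrictedEdgeCut G F ∧ F.ncard = k}

/-- The vertex-connectivity `κ(G)`: the minimum size of a set of vertices whose removal
leaves a disconnected graph or a graph with at most one vertex. -/
noncomputable def vertexConn (G : SimpleGraph V) : ℕ :=
  sInf {k | ∃ S : Set V, S.ncard = k ∧
    (¬(G.induce (Sᶜ : Set V)).Connected ∨ (Sᶜ : Set V).ncard ≤ 1)}

/-- The minimum edge-degree `ξ(G) = min {d(u) + d(v) - 2 : uv ∈ E(G)}`. -/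
noncomputable def minEdgeDegree (G : SimpleGraph V) : ℕ :=
  sInf {k | ∃ u v : V, G.Adj u v ∧ (G.neighborSet u).ncard + (G.neighborSet v).ncard - 2 = k}

/-- `G` is `λ'`-optimal if `λ'(G) = ξ(G)`. -/
def LambdaPrimeOptimal (G : SimpleGraph V) : Prop :=
  restrictedEdgeConn G = minEdgeDegree G

/-- The replacement product of `G1` and `G2` with respect to an edge-labelling `ℓ`,
where `ℓ x i` is the other endpoint of the edge of `G1` labelled `i` at the vertex `x`.
Vertices `(x, i)` and `(y, j)` are adjacent iff either `x = y` and `i j ∈ E(G2)`, or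
`x y ∈ E(G1)` and the edge `x y` is labelled `i` at `x` and `j` at `y`. -/
def replacementProduct {V1 V2 : Type*} (G1 : SimpleGraph V1) (G2 : SimpleGraph V2)
    (ℓ : V1 → V2 → V1) : SimpleGraph (V1 × V2) where
  Adj p q := (p.1 = q.1 ∧ G2.Adj p.2 q.2) ∨
    (G1.Adj p.1 q.1 ∧ ℓ p.1 p.2 = q.1 ∧ ℓ q.1 q.2 = p.1)
  symm := by
    constructor
    rintro p q (⟨h1, h2⟩ | ⟨h1, h2, h3⟩)
    · exact Or.inl ⟨h1.symm, h2.symm⟩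
    · exact Or.inr ⟨h1.symm, h3, h2⟩
  loopless := by
    constructor
    rintro p (⟨_, h⟩ | ⟨h, _⟩)
    · exact G2.loopless.irrefl _ h
    · exact G1.loopless.irrefl _ h

/-- `ℓ` is a valid edge-labelling of `G1` for the replacement product:
for each vertex `x`, `ℓ x` is injective and `ℓ x i` is always a neighbour of `x`
(hence `ℓ x` enumerates the neighbours of `x` when `G1` is `|V2|`-regular). -/
def IsRPLabelling {V1 V2 : Type*} (G1 : SimpleGraph V1) (ℓ : V1 → V2 → V1) : Prop :=
  (∀ x, Function.Injective (ℓ x)) ∧ ∀ x i, G1.Adj x (ℓ x i)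

end Defs

/-!
Every vertex of `G1 ® G2` has degree `δ2 + 1`, so the boundary of an edge inside a cloud
`{x} × V2` is a restricted cut of size `2δ2`; a minimum edge cut of `G1`, lifted to whole
clouds, gives one of size `λ1`.

Conversely let `X` be a side of a restricted cut. A cloud meeting both `X` and `Xᶜ`
contributes at least `λ2 = δ2` cloud edges, so two such clouds already give `2δ2`. Otherwise
every cloud but one, that of `x`, is full (in `X`) or empty, and the boundary consists of the
`G2`-boundary of the trace `D` of `X` on the cloud of `x` plus the crossing matching edges.
If `|D| ≤ 1`, all but `|D|` edges of `∂_{G1}(full clouds)` cross, which gives `λ1`. If `D` and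
its complement have two vertices each, `λ'`-optimality of `G2` gives `2δ2 - 2` cloud edges and
two more crossing edges are needed. They exist when there are no empty (or no full) clouds;
otherwise either there are two full–empty edges, or `x` together with one end of each of them
is a vertex cut of `G1`, and the bound on `κ1` turns this into `λ1` or `2δ2`.
-/

theorem Set.ncard_add_ncard_le_of_disjoint {α : Type*} {s t u : Set α} (hs : s ⊆ u)
    (ht : t ⊆ u) (hst : Disjoint s t) (hu : u.Finite := by toFinite_tac) :
    s.ncard + t.ncard ≤ u.ncard := by
  rw [← Set.ncard_union_eq hst (hu.subset hs) (hu.subset ht)]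
  exact Set.ncard_le_ncard (Set.union_subset hs ht) hu

section Boundary

variable {V : Type*} {G : SimpleGraph V}

theorem mk_mem_edgeBoundary_iff {X : Set V} {u v : V} :
    s(u, v) ∈ edgeBoundary G X ↔ G.Adj u v ∧ (u ∈ X ∧ v ∉ X ∨ u ∉ X ∧ v ∈ X) := by
  constructor
  · rintro ⟨he, a, ha, b, hb, heq⟩
    refine ⟨he, ?_⟩
    rcases Sym2.eq_iff.1 heq with ⟨rfl, rfl⟩ | ⟨rfl, rfl⟩
    · exact Or.inl ⟨ha, hb⟩
    · exact Or.inr ⟨hb, ha⟩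
  · rintro ⟨h, ⟨hu, hv⟩ | ⟨hu, hv⟩⟩
    · exact ⟨h, u, hu, v, hv, rfl⟩
    · exact ⟨h, v, hv, u, hu, Sym2.eq_swap⟩

theorem edgeBoundary_subset_edgeSet (X : Set V) : edgeBoundary G X ⊆ G.edgeSet :=
  fun _ he => he.1

theorem edgeBoundary_compl (X : Set V) : edgeBoundary G Xᶜ = edgeBoundary G X := by
  ext e
  induction e using Sym2.ind with
  | _ u v => simp only [mk_mem_edgeBoundary_iff, Set.mem_compl_iff, not_not]; tauto

theorem incidenceSet_subset_edgeBoundary {X : Set V} {w : V} (hw : w ∈ X)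
    (hiso : ∀ u ∈ X, ¬ G.Adj w u) : G.incidenceSet w ⊆ edgeBoundary G X := by
  rintro e ⟨he, hwe⟩
  induction e using Sym2.ind with
  | _ a b =>
    rcases Sym2.mem_iff.1 hwe with rfl | rfl
    · exact mk_mem_edgeBoundary_iff.2 ⟨he, Or.inl ⟨hw, fun hb => hiso b hb he⟩⟩
    · exact mk_mem_edgeBoundary_iff.2 ⟨he, Or.inr ⟨fun ha => hiso a ha he.symm, hw⟩⟩

theorem ncard_incidenceSet (v : V) : (G.incidenceSet v).ncard = (G.neighborSet v).ncard := by
  classical exact Set.ncard_congr' (G.incidenceSetEquivNeighborSet v)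

theorem SimpleGraph.Connected.exists_adj_mem_not_mem (hG : G.Connected) {X : Set V} {u v : V}
    (hu : u ∈ X) (hv : v ∉ X) : ∃ a ∈ X, ∃ b ∉ X, G.Adj a b := by
  obtain ⟨p⟩ := hG.preconnected u v
  obtain ⟨d, -, hd₁, hd₂⟩ := p.exists_boundary_dart X hu hv
  exact ⟨d.fst, hd₁, d.snd, hd₂, d.adj⟩

theorem SimpleGraph.Connected.edgeBoundary_nonempty (hG : G.Connected) {X : Set V}
    (hX : X.Nonempty) (hXc : Xᶜ.Nonempty) : (edgeBoundary G X).Nonempty := by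
  obtain ⟨a, ha, b, hb, h⟩ := hG.exists_adj_mem_not_mem hX.some_mem hXc.some_mem
  exact ⟨s(a, b), mk_mem_edgeBoundary_iff.2 ⟨h, Or.inl ⟨ha, hb⟩⟩⟩

theorem not_connected_deleteEdges_edgeBoundary {X : Set V} (hX : X.Nonempty)
    (hXc : Xᶜ.Nonempty) : ¬ (G.deleteEdges (edgeBoundary G X)).Connected := fun h => by
  obtain ⟨a, ha, b, hb, hab⟩ := h.exists_adj_mem_not_mem hX.some_mem hXc.some_mem
  rw [deleteEdges_adj] at hab
  exact hab.2 (mk_mem_edgeBoundary_iff.2 ⟨hab.1, Or.inl ⟨ha, hb⟩⟩)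

theorem exists_edgeBoundary_subset_of_not_connected [Nonempty V] {F : Set (Sym2 V)}
    (hF : ¬ (G.deleteEdges F).Connected) :
    ∃ X : Set V, X.Nonempty ∧ Xᶜ.Nonempty ∧ edgeBoundary G X ⊆ F ∧
      ∀ v w, (G.deleteEdges F).Adj v w → v ∈ X → w ∈ X := by
  obtain ⟨u, v, huv⟩ : ∃ u v, ¬ (G.deleteEdges F).Reachable u v := by
    by_contra! h
    exact hF ⟨h⟩
  refine ⟨{w | (G.deleteEdges F).Reachable u w}, ⟨u, .refl u⟩, ⟨v, huv⟩, ?_,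
    fun _ _ h hv => hv.trans h.reachable⟩
  rintro e ⟨he, a, ha, b, hb, rfl⟩
  by_contra heF
  exact hb (ha.trans (deleteEdges_adj.2 ⟨he, heF⟩).reachable)

end Boundary

section Connectivity

variable {V : Type*} {G : SimpleGraph V}

def NoIsolatedIn (G : SimpleGraph V) (X : Set V) : Prop :=
  ∀ v ∈ X, ∃ w ∈ X, G.Adj v w

theorem edgeConn_le_ncard_edgeBoundary {X : Set V} (hX : X.Nonempty) (hXc : Xᶜ.Nonempty) :
    edgeConn G ≤ (edgeBoundary G X).ncard :=
  Nat.sInf_le ⟨_, edgeBoundary_subset_edgeSet X, rfl,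
    not_connected_deleteEdges_edgeBoundary hX hXc⟩

theorem isRestrictedEdgeCut_edgeBoundary {X : Set V} (hX : X.Nonempty) (hXc : Xᶜ.Nonempty)
    (hin : NoIsolatedIn G X) (hout : NoIsolatedIn G Xᶜ) :
    IsRestrictedEdgeCut G (edgeBoundary G X) := by
  refine ⟨edgeBoundary_subset_edgeSet X, not_connected_deleteEdges_edgeBoundary hX hXc,
    fun v => ?_⟩
  by_cases hv : v ∈ X
  · obtain ⟨w, hw, h⟩ := hin v hv
    exact ⟨w, deleteEdges_adj.2 ⟨h, fun he => by
      rcases (mk_mem_edgeBoundary_iff.1 he).2 with ⟨-, h'⟩ | ⟨h', -⟩ <;> contradiction⟩⟩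
  · obtain ⟨w, hw, h⟩ := hout v hv
    exact ⟨w, deleteEdges_adj.2 ⟨h, fun he => by
      rcases (mk_mem_edgeBoundary_iff.1 he).2 with ⟨h', -⟩ | ⟨-, h'⟩ <;> contradiction⟩⟩

theorem restrictedEdgeConn_le_ncard_edgeBoundary {X : Set V} (hX : X.Nonempty)
    (hXc : Xᶜ.Nonempty) (hin : NoIsolatedIn G X) (hout : NoIsolatedIn G Xᶜ) :
    restrictedEdgeConn G ≤ (edgeBoundary G X).ncard :=
  Nat.sInf_le ⟨_, isRestrictedEdgeCut_edgeBoundary hX hXc hin hout, rfl⟩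

theorem vertexConn_le_ncard {S : Set V} (h : ¬ (G.induce Sᶜ).Connected) :
    vertexConn G ≤ S.ncard :=
  Nat.sInf_le ⟨S, rfl, Or.inl h⟩

variable [Finite V]

theorem ncard_neighborSet_lt_card (v : V) : (G.neighborSet v).ncard < Nat.card V :=
  Set.ncard_lt_card fun h => G.irrefl (h ▸ Set.mem_univ v : v ∈ G.neighborSet v)

theorem exists_ncard_edgeBoundary_le_edgeConn [Nontrivial V] :
    ∃ X : Set V, X.Nonempty ∧ Xᶜ.Nonempty ∧ (edgeBoundary G X).ncard ≤ edgeConn G := by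
  obtain ⟨v, w, hvw⟩ := exists_pair_ne V
  obtain ⟨F, -, hF, hdis⟩ := Nat.sInf_mem (s := {k | ∃ F : Set (Sym2 V), F ⊆ G.edgeSet ∧
    F.ncard = k ∧ ¬(G.deleteEdges F).Connected})
    ⟨_, _, edgeBoundary_subset_edgeSet {v}, rfl,
      not_connected_deleteEdges_edgeBoundary ⟨v, rfl⟩ ⟨w, hvw.symm⟩⟩
  obtain ⟨X, hX, hXc, hXF, -⟩ := exists_edgeBoundary_subset_of_not_connected hdis
  exact ⟨X, hX, hXc, (Set.ncard_le_ncard hXF).trans hF.le⟩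

theorem le_restrictedEdgeConn [Nonempty V] {k : ℕ} (hcut : ∃ F, IsRestrictedEdgeCut G F)
    (h : ∀ X : Set V, X.Nonempty → Xᶜ.Nonempty → NoIsolatedIn G X → NoIsolatedIn G Xᶜ →
      k ≤ (edgeBoundary G X).ncard) :
    k ≤ restrictedEdgeConn G := by
  obtain ⟨F₀, hF₀⟩ := hcut
  refine le_csInf ⟨_, F₀, hF₀, rfl⟩ ?_
  rintro _ ⟨F, ⟨-, hF, hdeg⟩, rfl⟩
  obtain ⟨X, hX, hXc, hXF, hclosed⟩ := exists_edgeBoundary_subset_of_not_connected hF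
  refine (h X hX hXc (fun v hv => ?_) (fun v hv => ?_)).trans (Set.ncard_le_ncard hXF)
  · obtain ⟨w, hw⟩ := hdeg v
    exact ⟨w, hclosed v w hw hv, (deleteEdges_adj.1 hw).1⟩
  · obtain ⟨w, hw⟩ := hdeg v
    exact ⟨w, fun hwX => hv (hclosed w v hw.symm hwX), (deleteEdges_adj.1 hw).1⟩

theorem ncard_edgeBoundary_pair_add_two_le {u v : V} (h : G.Adj u v) :
    (edgeBoundary G {u, v}).ncard + 2 ≤ (G.neighborSet u).ncard + (G.neighborSet v).ncard := by
  have hsub : edgeBoundary G {u, v} ⊆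
      (G.incidenceSet u \ {s(u, v)}) ∪ (G.incidenceSet v \ {s(u, v)}) := by
    intro e he
    have hne : e ≠ s(u, v) := by
      rintro rfl
      simp [mk_mem_edgeBoundary_iff] at he
    obtain ⟨he', a, ha, b, -, rfl⟩ := he
    rcases ha with rfl | rfl
    · exact Or.inl ⟨⟨he', Sym2.mem_mk_left _ _⟩, hne⟩
    · exact Or.inr ⟨⟨he', Sym2.mem_mk_left _ _⟩, hne⟩
  have hu := Set.ncard_sdiff_singleton_add_one (G.mk'_mem_incidenceSet_left_iff.2 h)
  have hv := Set.ncard_sdiff_singleton_add_one (G.mk'_mem_incidenceSet_right_iff.2 h)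
  rw [ncard_incidenceSet] at hu hv
  have := (Set.ncard_le_ncard hsub).trans (Set.ncard_union_le _ _)
  omega

end Connectivity

section Regular

variable {V : Type*} [Finite V] {G : SimpleGraph V}

theorem ncard_neighborSet_le_ncard_edgeBoundary {X : Set V} {w : V} (hw : w ∈ X)
    (hiso : ∀ u ∈ X, ¬ G.Adj w u) : (G.neighborSet w).ncard ≤ (edgeBoundary G X).ncard :=
  ncard_incidenceSet (G := G) w ▸ Set.ncard_le_ncard (incidenceSet_subset_edgeBoundary hw hiso)

theorem ncard_edgeBoundary_sdiff_singleton_add_le {X : Set V} {w : V} (hw : w ∈ X)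
    (hiso : ∀ u ∈ X, ¬ G.Adj w u) :
    (edgeBoundary G (X \ {w})).ncard + (G.neighborSet w).ncard ≤ (edgeBoundary G X).ncard := by
  have hout : ∀ ⦃a b⦄, G.Adj a b → a ∈ X \ {w} → b ∉ X \ {w} → b ∉ X := by
    rintro a b hab ⟨ha, -⟩ hb hbX
    obtain rfl : b = w := by by_contra hbw; exact hb ⟨hbX, hbw⟩
    exact hiso a ha hab.symm
  rw [← ncard_incidenceSet]
  refine Set.ncard_add_ncard_le_of_disjoint ?_ (incidenceSet_subset_edgeBoundary hw hiso) ?_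
  · rintro e ⟨he, a, ha, b, hb, rfl⟩
    exact mk_mem_edgeBoundary_iff.2 ⟨he, Or.inl ⟨ha.1, hout he ha hb⟩⟩
  · refine Set.disjoint_left.2 ?_
    rintro e ⟨he, a, ha, b, hb, rfl⟩ ⟨-, hwe⟩
    rcases Sym2.mem_iff.1 hwe with rfl | rfl
    · exact ha.2 rfl
    · exact hout he ha hb hw

variable {δ : ℕ} (hreg : ∀ v, (G.neighborSet v).ncard = δ)
include hreg

theorem minEdgeDegree_add_two_of_regular {u v : V} (h : G.Adj u v) :
    minEdgeDegree G + 2 = 2 * δ := by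
  have hset : {k | ∃ u v : V, G.Adj u v ∧
      (G.neighborSet u).ncard + (G.neighborSet v).ncard - 2 = k} = {δ + δ - 2} := by
    ext k
    simp only [hreg, Set.mem_ofPred_eq, Set.mem_singleton_iff]
    exact ⟨fun ⟨_, _, _, hk⟩ => hk.symm, fun hk => ⟨u, v, h, hk.symm⟩⟩
  have hδ : 0 < δ := hreg u ▸ (Set.ncard_pos (Set.toFinite _)).2 ⟨v, h⟩
  rw [minEdgeDegree, hset, csInf_singleton]
  omega

theorem two_le_of_regular (hG : G.Connected) (hcard : 3 ≤ Nat.card V) : 2 ≤ δ := by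
  have hne : ∀ s : Set V, s.ncard ≤ 2 → sᶜ.Nonempty := fun s hs => by
    refine Set.nonempty_compl.2 fun h => ?_
    rw [h, Set.ncard_univ] at hs
    omega
  obtain ⟨u⟩ := hG.nonempty
  obtain ⟨a, rfl, b, -, hab⟩ := hG.exists_adj_mem_not_mem (X := {u}) rfl
    (hne {u} (by simp)).some_mem
  have hpair := ncard_edgeBoundary_pair_add_two_le hab
  have hpos := (Set.ncard_pos (Set.toFinite _)).2 <|
    hG.edgeBoundary_nonempty (X := {a, b}) ⟨a, Or.inl rfl⟩
      (hne _ (Set.ncard_insert_le _ _ |>.trans (by simp)))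
  rw [hreg, hreg] at hpair
  omega

-- `λ'(G) ≥ 2δ - 2`, written without truncated subtraction.
variable (hopt : 2 * δ ≤ restrictedEdgeConn G + 2) (hδ : 2 ≤ δ)
include hopt hδ

theorem le_ncard_edgeBoundary_of_regular {X : Set V} (hX : X.Nonempty) (hXc : Xᶜ.Nonempty) :
    δ ≤ (edgeBoundary G X).ncard := by
  by_contra! hlt
  have hin : ∀ Y : Set V, edgeBoundary G Y = edgeBoundary G X → NoIsolatedIn G Y := by
    intro Y hY w hw
    by_contra! hiso
    have := ncard_neighborSet_le_ncard_edgeBoundary hw hiso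
    rw [hreg, hY] at this
    omega
  have := restrictedEdgeConn_le_ncard_edgeBoundary hX hXc (hin X rfl)
    (hin Xᶜ (edgeBoundary_compl X))
  omega

theorem two_mul_le_ncard_edgeBoundary_add_two_of_regular {X : Set V} (hX : 1 < X.ncard)
    (hXc : 1 < Xᶜ.ncard) : 2 * δ ≤ (edgeBoundary G X).ncard + 2 := by
  by_contra! hlt
  have hin : ∀ Y : Set V, edgeBoundary G Y = edgeBoundary G X → 1 < Y.ncard →
      NoIsolatedIn G Y := by
    intro Y hY hYcard w hw
    by_contra! hiso
    -- an isolated vertex `w` of `Y` adds its `δ` edges to the boundary of `Y \ {w}`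
    have hsplit := ncard_edgeBoundary_sdiff_singleton_add_le hw hiso
    have hrest := le_ncard_edgeBoundary_of_regular hreg hopt hδ (X := Y \ {w})
      (Set.nonempty_of_ncard_ne_zero (by rw [Set.ncard_sdiff_singleton_of_mem hw]; omega))
      ⟨w, fun h => h.2 rfl⟩
    rw [hreg, hY] at hsplit
    omega
  have := restrictedEdgeConn_le_ncard_edgeBoundary (Set.nonempty_of_ncard_ne_zero (by omega))
    (Set.nonempty_of_ncard_ne_zero (by omega)) (hin X rfl hX)
    (hin Xᶜ (edgeBoundary_compl X) hXc)
  omega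

theorem le_edgeConn_of_regular [Nontrivial V] : δ ≤ edgeConn G :=
  let ⟨_, hX, hXc, hle⟩ := exists_ncard_edgeBoundary_le_edgeConn (G := G)
  (le_ncard_edgeBoundary_of_regular hreg hopt hδ hX hXc).trans hle

end Regular

section VertexCut

variable {V : Type*} {G : SimpleGraph V}

theorem ncard_le_ncard_edgeSet_between [Finite V] {B W S : Set V} (hBW : Disjoint B W)
    (hS : ∀ b ∈ S, b ∈ B ∧ ∃ w ∈ W, G.Adj b w) : S.ncard ≤ (G.between B W).edgeSet.ncard := by
  choose! f hfW hf using fun b hb => (hS b hb).2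
  refine Set.ncard_le_ncard_of_injOn (fun b => s(b, f b))
    (fun b hb => ⟨hf b hb, Or.inl ⟨(hS b hb).1, hfW b hb⟩⟩) ?_
  intro b₁ hb₁ b₂ hb₂ heq
  rcases Sym2.eq_iff.1 heq with ⟨h, -⟩ | ⟨h, -⟩
  · exact h
  · exact absurd (h ▸ hfW b₂ hb₂) (Set.disjoint_left.1 hBW (hS b₁ hb₁).1)

variable {x : V} {B W : Set V}

theorem vertexConn_le_of_forall_not_adj (hBW : Disjoint B W) (hunion : B ∪ W = {x}ᶜ)
    (hW : W.Nonempty) {b₀ : V} (hb₀ : b₀ ∈ B) (hb₀W : ∀ w ∈ W, ¬ G.Adj b₀ w) :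
    vertexConn G ≤ {b ∈ B | ∃ w ∈ W, G.Adj b w}.ncard + 1 := by
  set N := {b ∈ B | ∃ w ∈ W, G.Adj b w}
  have hcover : ∀ y, y ≠ x ↔ y ∈ B ∨ y ∈ W := fun y => by
    rw [← Set.mem_union, hunion]; rfl
  obtain ⟨w₀, hw₀⟩ := hW
  have hw₀S : w₀ ∉ insert x N := by
    rintro (rfl | ⟨hB, -⟩)
    · exact (hcover w₀).2 (Or.inr hw₀) rfl
    · exact Set.disjoint_left.1 hBW hB hw₀
  have hb₀S : b₀ ∉ insert x N := by
    rintro (rfl | ⟨-, w, hw, h⟩)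
    · exact (hcover b₀).2 (Or.inl hb₀) rfl
    · exact hb₀W w hw h
  -- `x` and the `B`-ends of the `B`–`W` edges separate `b₀` from `W`
  have hsep : ¬ (G.induce (insert x N)ᶜ).Connected := fun hconn => by
    obtain ⟨a, ha, b, hb, hab⟩ := hconn.exists_adj_mem_not_mem
      (X := {p : ↥(insert x N)ᶜ | p.1 ∈ W}) (u := (⟨w₀, hw₀S⟩ : ↥(insert x N)ᶜ))
      (v := ⟨b₀, hb₀S⟩) hw₀ (Set.disjoint_left.1 hBW hb₀)
    have hbB : b.1 ∈ B :=
      ((hcover b.1).1 fun h => b.2 (Or.inl h)).resolve_right hb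
    exact b.2 (Or.inr ⟨hbB, a, ha, hab.symm⟩)
  exact (vertexConn_le_ncard hsep).trans (Set.ncard_insert_le x N)

theorem two_le_or_vertexConn_le [Finite V] (hB : B.Nonempty) (hW : W.Nonempty)
    (hBW : Disjoint B W) (hunion : B ∪ W = {x}ᶜ) (hcard : 4 ≤ Nat.card V) :
    2 ≤ (G.between B W).edgeSet.ncard ∨
      vertexConn G ≤ (G.between B W).edgeSet.ncard + 1 := by
  by_cases hBiso : ∃ b ∈ B, ∀ w ∈ W, ¬ G.Adj b w
  · obtain ⟨b, hb, hbW⟩ := hBiso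
    refine Or.inr ((vertexConn_le_of_forall_not_adj hBW hunion hW hb hbW).trans ?_)
    exact Nat.add_le_add_right (ncard_le_ncard_edgeSet_between hBW fun _ h => h) 1
  by_cases hWiso : ∃ w ∈ W, ∀ b ∈ B, ¬ G.Adj w b
  · obtain ⟨w, hw, hwB⟩ := hWiso
    refine Or.inr ((vertexConn_le_of_forall_not_adj hBW.symm (Set.union_comm B W ▸ hunion)
      hB hw hwB).trans ?_)
    rw [between_comm]
    exact Nat.add_le_add_right (ncard_le_ncard_edgeSet_between hBW.symm fun _ h => h) 1
  push Not at hBiso hWiso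
  have hBe := ncard_le_ncard_edgeSet_between (G := G) hBW fun b hb => ⟨hb, hBiso b hb⟩
  have hWe := ncard_le_ncard_edgeSet_between (G := G) hBW.symm fun w hw => ⟨hw, hWiso w hw⟩
  have hsum : B.ncard + W.ncard + 1 = Nat.card V := by
    rw [← Set.ncard_union_eq hBW, hunion, Set.ncard_compl, Set.ncard_singleton]
    have : 0 < Nat.card V := by omega
    omega
  rw [between_comm] at hWe
  omega

end VertexCut

namespace replacementProduct

variable {V1 V2 : Type*} {G1 : SimpleGraph V1} {G2 : SimpleGraph V2} {ℓ : V1 → V2 → V1}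

theorem range_eq_neighborSet [Finite V1] (hℓ : IsRPLabelling G1 ℓ)
    (hreg : ∀ x, (G1.neighborSet x).ncard = Nat.card V2) (x : V1) :
    Set.range (ℓ x) = G1.neighborSet x := by
  refine Set.eq_of_subset_of_ncard_le (Set.range_subset_iff.2 (hℓ.2 x)) ?_
  rw [← Set.image_univ, Set.ncard_image_of_injective _ (hℓ.1 x), Set.ncard_univ, hreg]

theorem map_fst_map_mk (x : V1) (e : Sym2 V2) :
    Sym2.map Prod.fst (Sym2.map (Prod.mk x) e) = s(x, x) := by
  induction e using Sym2.ind with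
  | _ i j => rfl

theorem ncard_map_mk_image (x : V1) (s : Set (Sym2 V2)) :
    (Sym2.map (Prod.mk x) '' s).ncard = s.ncard :=
  Set.ncard_image_of_injective s (Sym2.map.injective (Prod.mk_right_injective x))

theorem map_mk_image_edgeBoundary_subset (X : Set (V1 × V2)) (x : V1) :
    Sym2.map (Prod.mk x) '' edgeBoundary G2 (Prod.mk x ⁻¹' X) ⊆
      edgeBoundary (replacementProduct G1 G2 ℓ) X := by
  rintro _ ⟨_, ⟨he, i, hi, j, hj, rfl⟩, rfl⟩
  exact mk_mem_edgeBoundary_iff.2 ⟨Or.inl ⟨rfl, he⟩, Or.inl ⟨hi, hj⟩⟩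

theorem ncard_edgeBoundary_fiber_add_fiber_le [Finite V1] [Finite V2] (X : Set (V1 × V2))
    {x y : V1} (hxy : x ≠ y) :
    (edgeBoundary G2 (Prod.mk x ⁻¹' X)).ncard + (edgeBoundary G2 (Prod.mk y ⁻¹' X)).ncard ≤
      (edgeBoundary (replacementProduct G1 G2 ℓ) X).ncard := by
  rw [← ncard_map_mk_image x (edgeBoundary G2 _), ← ncard_map_mk_image y (edgeBoundary G2 _)]
  refine Set.ncard_add_ncard_le_of_disjoint (map_mk_image_edgeBoundary_subset X x)
    (map_mk_image_edgeBoundary_subset X y) (Set.disjoint_left.2 ?_)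
  rintro _ ⟨e, -, rfl⟩ ⟨f, -, h⟩
  have := congrArg (Sym2.map Prod.fst) h
  rw [map_fst_map_mk, map_fst_map_mk] at this
  rcases Sym2.eq_iff.1 this with ⟨h, -⟩ | ⟨h, -⟩ <;> exact hxy h.symm

theorem noIsolatedIn_preimage_fst (hdeg : ∀ i, ∃ j, G2.Adj i j) (A : Set V1) :
    NoIsolatedIn (replacementProduct G1 G2 ℓ) (Prod.fst ⁻¹' A) := fun p hp =>
  let ⟨j, hj⟩ := hdeg p.2
  ⟨(p.1, j), hp, Or.inl ⟨rfl, hj⟩⟩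

theorem exists_mem_fst_ne_of_ncard_fiber_le_one [Finite V2] {X : Set (V1 × V2)} (hX : X.Nonempty)
    (hXin : NoIsolatedIn (replacementProduct G1 G2 ℓ) X) {x : V1}
    (hD : (Prod.mk x ⁻¹' X).ncard ≤ 1) : ∃ p ∈ X, p.1 ≠ x := by
  obtain ⟨⟨y, i⟩, hp⟩ := hX
  by_cases hy : y = x
  · subst hy
    obtain ⟨⟨z, j⟩, hq, hpq⟩ := hXin _ hp
    refine ⟨_, hq, fun hz => ?_⟩
    obtain rfl : z = y := hz
    rcases hpq with ⟨-, hij⟩ | ⟨h, -⟩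
    · have := Set.ncard_le_ncard (s := {i, j}) (t := Prod.mk z ⁻¹' X)
        (Set.insert_subset hp (Set.singleton_subset_iff.2 hq))
      rw [Set.ncard_pair hij.ne] at this
      omega
    · exact G1.irrefl h
  · exact ⟨_, hp, hy⟩

-- `fullClouds Xᶜ` consists of the clouds disjoint from `X`.
def fullClouds (X : Set (V1 × V2)) : Set V1 :=
  {y | ∀ i, (y, i) ∈ X}

variable [Nonempty V2]

/-- The port at `x` of the edge `xy` of `G1`; a junk value unless `y` is a neighbour of `x`. -/
noncomputable def label (ℓ : V1 → V2 → V1) (x y : V1) : V2 :=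
  Function.invFun (ℓ x) y

theorem apply_label (hrange : ∀ x, Set.range (ℓ x) = G1.neighborSet x) {x y : V1}
    (h : G1.Adj x y) : ℓ x (label ℓ x y) = y :=
  Function.invFun_eq (by rw [← Set.mem_range, hrange]; exact h)

theorem label_apply (hinj : ∀ x, Function.Injective (ℓ x)) (x : V1) (i : V2) :
    label ℓ x (ℓ x i) = i :=
  Function.leftInverse_invFun (hinj x) i

theorem adj_label (hrange : ∀ x, Set.range (ℓ x) = G1.neighborSet x) {x y : V1}
    (h : G1.Adj x y) : (replacementProduct G1 G2 ℓ).Adj (x, label ℓ x y) (y, label ℓ y x) :=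
  Or.inr ⟨h, apply_label hrange h, apply_label hrange h.symm⟩

/-- The edge of the replacement product joining the clouds of the ends of an edge of `G1`. -/
noncomputable def liftEdge (ℓ : V1 → V2 → V1) : Sym2 V1 → Sym2 (V1 × V2) :=
  Sym2.lift ⟨fun x y => s((x, label ℓ x y), (y, label ℓ y x)), fun _ _ => Sym2.eq_swap⟩

theorem liftEdge_mk (x y : V1) :
    liftEdge ℓ s(x, y) = s((x, label ℓ x y), (y, label ℓ y x)) :=
  rfl

theorem map_fst_liftEdge (e : Sym2 V1) : Sym2.map Prod.fst (liftEdge ℓ e) = e := by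
  induction e using Sym2.ind with
  | _ x y => rfl

theorem liftEdge_injective : Function.Injective (liftEdge ℓ : Sym2 V1 → Sym2 (V1 × V2)) :=
  Function.LeftInverse.injective map_fst_liftEdge

theorem map_mk_ne_liftEdge (x : V1) (e : Sym2 V2) {f : Sym2 V1} (hf : f ∈ G1.edgeSet) :
    Sym2.map (Prod.mk x) e ≠ liftEdge ℓ f := fun h => by
  have := congrArg (Sym2.map Prod.fst) h
  rw [map_fst_map_mk, map_fst_liftEdge] at this
  exact G1.not_isDiag_of_mem_edgeSet hf (this ▸ Sym2.mk_isDiag_iff.2 rfl)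

theorem eq_liftEdge_of_adj (hinj : ∀ x, Function.Injective (ℓ x)) {p q : V1 × V2}
    (h : (replacementProduct G1 G2 ℓ).Adj p q) (hpq : p.1 ≠ q.1) :
    G1.Adj p.1 q.1 ∧ s(p, q) = liftEdge ℓ s(p.1, q.1) := by
  obtain ⟨x, i⟩ := p
  obtain ⟨y, j⟩ := q
  rcases h with ⟨h, -⟩ | ⟨hxy, rfl, h⟩
  · exact absurd h hpq
  have hj := label_apply hinj (ℓ x i) j
  rw [h] at hj
  exact ⟨hxy, by rw [liftEdge_mk, label_apply hinj, hj]⟩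

theorem edgeBoundary_preimage_fst_subset (hinj : ∀ x, Function.Injective (ℓ x)) (A : Set V1) :
    edgeBoundary (replacementProduct G1 G2 ℓ) (Prod.fst ⁻¹' A) ⊆
      liftEdge ℓ '' edgeBoundary G1 A := by
  rintro _ ⟨he, p, hp, q, hq, rfl⟩
  obtain ⟨hadj, heq⟩ := eq_liftEdge_of_adj hinj he fun h => hq (show q.1 ∈ A from h ▸ hp)
  exact ⟨_, ⟨hadj, p.1, hp, q.1, hq, rfl⟩, heq.symm⟩

theorem neighborSet_subset (hinj : ∀ x, Function.Injective (ℓ x)) (x : V1) (i : V2) :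
    (replacementProduct G1 G2 ℓ).neighborSet (x, i) ⊆
      insert (ℓ x i, label ℓ (ℓ x i) x) (Prod.mk x '' G2.neighborSet i) := by
  rintro ⟨y, j⟩ (⟨rfl, h⟩ | ⟨-, rfl, h⟩)
  · exact Or.inr ⟨j, h, rfl⟩
  · have hj := label_apply hinj (ℓ x i) j
    rw [h] at hj
    exact Or.inl (by rw [hj])

theorem disjoint_fullClouds_compl (X : Set (V1 × V2)) :
    Disjoint (fullClouds X) (fullClouds Xᶜ) :=
  Set.disjoint_left.2 fun _ h h' => h' (Classical.arbitrary V2) (h _)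

theorem liftEdge_image_subset_edgeBoundary (hrange : ∀ x, Set.range (ℓ x) = G1.neighborSet x)
    {X : Set (V1 × V2)} {x : V1} (hfe : ∀ y ≠ x, y ∈ fullClouds X ∨ y ∈ fullClouds Xᶜ) :
    liftEdge ℓ '' (edgeBoundary G1 (fullClouds X) \ (fun i => s(x, ℓ x i)) '' (Prod.mk x ⁻¹' X))
      ⊆ edgeBoundary (replacementProduct G1 G2 ℓ) X := by
  rintro _ ⟨_, ⟨⟨hab, a, ha, b, hb, rfl⟩, hx⟩, rfl⟩
  replace hab : G1.Adj a b := hab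
  refine mk_mem_edgeBoundary_iff.2 ⟨adj_label hrange hab, Or.inl ⟨ha _, fun hbX => ?_⟩⟩
  by_cases hbx : b = x
  · subst hbx
    exact hx ⟨_, hbX, by simp only [apply_label hrange hab.symm, Sym2.eq_swap]⟩
  · exact (hfe b hbx).elim hb fun h => h _ hbX

theorem ncard_neighborSet_le [Finite V2] {δ2 : ℕ} (hinj : ∀ x, Function.Injective (ℓ x))
    (hr2 : ∀ i, (G2.neighborSet i).ncard = δ2) (x : V1) (i : V2) :
    ((replacementProduct G1 G2 ℓ).neighborSet (x, i)).ncard ≤ δ2 + 1 := by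
  refine (Set.ncard_le_ncard (neighborSet_subset hinj x i)).trans <|
    (Set.ncard_insert_le _ _).trans ?_
  rw [Set.ncard_image_of_injective _ (Prod.mk_right_injective x), hr2]

section Finite

variable [Finite V1] [Finite V2]

theorem ncard_edgeBoundary_fiber_add_le {X : Set (V1 × V2)} (x : V1) {E : Set (Sym2 V1)}
    (hE : E ⊆ G1.edgeSet)
    (hEX : liftEdge ℓ '' E ⊆ edgeBoundary (replacementProduct G1 G2 ℓ) X) :
    (edgeBoundary G2 (Prod.mk x ⁻¹' X)).ncard + E.ncard ≤
      (edgeBoundary (replacementProduct G1 G2 ℓ) X).ncard := by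
  rw [← ncard_map_mk_image x,
    ← Set.ncard_image_of_injective E (liftEdge_injective (V2 := V2) (ℓ := ℓ))]
  refine Set.ncard_add_ncard_le_of_disjoint (map_mk_image_edgeBoundary_subset X x) hEX
    (Set.disjoint_left.2 ?_)
  rintro _ ⟨e, -, rfl⟩ ⟨f, hf, h⟩
  exact map_mk_ne_liftEdge x e (hE hf) h.symm

theorem ncard_edgeBoundary_fiber_add_le_of_subset
    (hrange : ∀ x, Set.range (ℓ x) = G1.neighborSet x)
    {X : Set (V1 × V2)} {x : V1} (hfe : ∀ y ≠ x, y ∈ fullClouds X ∨ y ∈ fullClouds Xᶜ)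
    {E : Set (Sym2 V1)}
    (hE : E ⊆ edgeBoundary G1 (fullClouds X) \ (fun i => s(x, ℓ x i)) '' (Prod.mk x ⁻¹' X)) :
    (edgeBoundary G2 (Prod.mk x ⁻¹' X)).ncard + E.ncard ≤
      (edgeBoundary (replacementProduct G1 G2 ℓ) X).ncard :=
  ncard_edgeBoundary_fiber_add_le x
    (hE.trans (Set.sdiff_subset.trans (edgeBoundary_subset_edgeSet _)))
    ((Set.image_mono hE).trans (liftEdge_image_subset_edgeBoundary hrange hfe))

theorem edgeConn_le_of_ncard_fiber_le_one (hrange : ∀ x, Set.range (ℓ x) = G1.neighborSet x)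
    (hc2 : G2.Connected) (hcard : 2 ≤ Nat.card V2) {X : Set (V1 × V2)} (hX : X.Nonempty)
    (hXin : NoIsolatedIn (replacementProduct G1 G2 ℓ) X) {x : V1}
    (hfe : ∀ y ≠ x, y ∈ fullClouds X ∨ y ∈ fullClouds Xᶜ)
    (hD : (Prod.mk x ⁻¹' X).ncard ≤ 1) :
    edgeConn G1 ≤ (edgeBoundary (replacementProduct G1 G2 ℓ) X).ncard := by
  set D := Prod.mk x ⁻¹' X
  have hDc : Dᶜ.Nonempty := Set.nonempty_compl.2 fun h => by
    rw [h, Set.ncard_univ] at hD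
    omega
  obtain ⟨p, hpX, hpx⟩ := exists_mem_fst_ne_of_ncard_fiber_le_one hX hXin hD
  have hB : p.1 ∈ fullClouds X := (hfe p.1 hpx).resolve_right fun h => h p.2 hpX
  have hxB : x ∉ fullClouds X := fun hx =>
    hDc.ne_empty (Set.compl_empty_iff.2 (Set.eq_univ_of_forall hx))
  have hconn := edgeConn_le_ncard_edgeBoundary (G := G1) ⟨_, hB⟩ ⟨x, hxB⟩
  have hsplit := Set.ncard_le_ncard_sdiff_add_ncard (edgeBoundary G1 (fullClouds X))
    ((fun i => s(x, ℓ x i)) '' D)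
  have himg : ((fun i => s(x, ℓ x i)) '' D).ncard ≤ D.ncard := Set.ncard_image_le
  have hcount : (edgeBoundary G2 D).ncard +
      (edgeBoundary G1 (fullClouds X) \ (fun i => s(x, ℓ x i)) '' D).ncard ≤
        (edgeBoundary (replacementProduct G1 G2 ℓ) X).ncard :=
    ncard_edgeBoundary_fiber_add_le_of_subset hrange hfe subset_rfl
  have hd : D.ncard ≤ (edgeBoundary G2 D).ncard := by
    rcases D.eq_empty_or_nonempty with hD0 | hDne
    · simp [hD0]
    · exact hD.trans ((Set.ncard_pos (Set.toFinite _)).2 (hc2.edgeBoundary_nonempty hDne hDc))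
  omega

theorem ncard_compl_fiber_add_le (hinj : ∀ x, Function.Injective (ℓ x))
    (hrange : ∀ x, Set.range (ℓ x) = G1.neighborSet x) {X : Set (V1 × V2)} {x : V1}
    (hfull : ∀ y ≠ x, y ∈ fullClouds X) :
    (Prod.mk x ⁻¹' X)ᶜ.ncard + (edgeBoundary G2 (Prod.mk x ⁻¹' X)).ncard ≤
      (edgeBoundary (replacementProduct G1 G2 ℓ) X).ncard := by
  have hport : Function.Injective fun i => s(x, ℓ x i) :=
    fun i j h => hinj x (Sym2.congr_right.1 h)
  rw [add_comm, ← Set.ncard_image_of_injective _ hport]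
  refine ncard_edgeBoundary_fiber_add_le_of_subset hrange (fun y hy => Or.inl (hfull y hy)) ?_
  rintro _ ⟨i, hi, rfl⟩
  have hadj : G1.Adj x (ℓ x i) := (hrange x).subset (Set.mem_range_self i)
  refine ⟨mk_mem_edgeBoundary_iff.2 ⟨hadj, Or.inr ⟨fun hx => hi (hx i), hfull _ hadj.ne'⟩⟩, ?_⟩
  rintro ⟨j, hj, h⟩
  exact hi (hport h ▸ hj)

theorem ncard_edgeBoundary_fiber_add_ncard_between_le
    (hrange : ∀ x, Set.range (ℓ x) = G1.neighborSet x) {X : Set (V1 × V2)} {x : V1}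
    (hfe : ∀ y ≠ x, y ∈ fullClouds X ∨ y ∈ fullClouds Xᶜ) (hx : x ∉ fullClouds X)
    (hx' : x ∉ fullClouds Xᶜ) :
    (edgeBoundary G2 (Prod.mk x ⁻¹' X)).ncard +
        (G1.between (fullClouds X) (fullClouds Xᶜ)).edgeSet.ncard ≤
      (edgeBoundary (replacementProduct G1 G2 ℓ) X).ncard := by
  refine ncard_edgeBoundary_fiber_add_le_of_subset hrange hfe fun e he => ?_
  induction e using Sym2.ind with
  | _ a b =>
    obtain ⟨hab, hcross⟩ := he
    have hdisj := Set.disjoint_left.1 (disjoint_fullClouds_compl X)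
    refine ⟨mk_mem_edgeBoundary_iff.2 ⟨hab, ?_⟩, ?_⟩
    · rcases hcross with ⟨ha, hb⟩ | ⟨ha, hb⟩
      · exact Or.inl ⟨ha, fun h => hdisj h hb⟩
      · exact Or.inr ⟨fun h => hdisj h ha, hb⟩
    · rintro ⟨j, -, h⟩
      have hxe : x ∈ s(a, b) := h ▸ Sym2.mem_mk_left _ _
      rcases Sym2.mem_iff.1 hxe with rfl | rfl <;> tauto

theorem min_le_ncard_edgeBoundary_of_fullClouds_nonempty {δ2 : ℕ}
    (hrange : ∀ x, Set.range (ℓ x) = G1.neighborSet x) (hr2 : ∀ i, (G2.neighborSet i).ncard = δ2)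
    (hopt : 2 * δ2 ≤ restrictedEdgeConn G2 + 2) (hδ2 : 2 ≤ δ2) (hcard1 : 4 ≤ Nat.card V1)
    (hκ : edgeConn G1 + 1 ≤ vertexConn G1 + edgeConn G2 ∨ edgeConn G2 + 1 ≤ vertexConn G1)
    {X : Set (V1 × V2)} {x : V1} (hfe : ∀ y ≠ x, y ∈ fullClouds X ∨ y ∈ fullClouds Xᶜ)
    (hD : 1 < (Prod.mk x ⁻¹' X).ncard) (hD' : 1 < (Prod.mk x ⁻¹' X)ᶜ.ncard)
    (hB : (fullClouds X).Nonempty) (hW : (fullClouds Xᶜ).Nonempty) :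
    min (edgeConn G1) (2 * δ2) ≤ (edgeBoundary (replacementProduct G1 G2 ℓ) X).ncard := by
  have : Nontrivial V2 := Finite.one_lt_card_iff_nontrivial.1 (hD.trans_le (Set.ncard_le_card _))
  have hd := two_mul_le_ncard_edgeBoundary_add_two_of_regular hr2 hopt hδ2 hD hD'
  have hDne : (Prod.mk x ⁻¹' X).Nonempty := Set.nonempty_of_ncard_ne_zero (by omega)
  have hDcne : (Prod.mk x ⁻¹' X)ᶜ.Nonempty := Set.nonempty_of_ncard_ne_zero (by omega)
  have hx : x ∉ fullClouds X := fun h =>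
    hDcne.ne_empty (Set.compl_empty_iff.2 (Set.eq_univ_of_forall h))
  have hx' : x ∉ fullClouds Xᶜ := fun h => hDne.ne_empty (Set.eq_empty_of_forall_notMem h)
  have hunion : fullClouds X ∪ fullClouds Xᶜ = {x}ᶜ := by
    ext y
    refine ⟨?_, fun hy => hfe y hy⟩
    rintro (h | h) rfl <;> contradiction
  have hcount := ncard_edgeBoundary_fiber_add_ncard_between_le (G2 := G2) hrange hfe hx hx'
  rcases two_le_or_vertexConn_le (G := G1) hB hW (disjoint_fullClouds_compl X) hunion hcard1
    with he | hvc
  · exact min_le_of_right_le (by omega)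
  rcases hκ with hκ | hκ
  · have := edgeConn_le_ncard_edgeBoundary (G := G2) hDne hDcne
    exact min_le_of_left_le (by omega)
  · have := le_edgeConn_of_regular hr2 hopt hδ2
    have := le_ncard_edgeBoundary_of_regular hr2 hopt hδ2 hDne hDcne
    exact min_le_of_right_le (by omega)

theorem min_le_ncard_edgeBoundary_of_forall_ne {δ2 : ℕ}
    (hinj : ∀ x, Function.Injective (ℓ x)) (hrange : ∀ x, Set.range (ℓ x) = G1.neighborSet x)
    (hc2 : G2.Connected) (hr2 : ∀ i, (G2.neighborSet i).ncard = δ2)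
    (hopt : 2 * δ2 ≤ restrictedEdgeConn G2 + 2) (hδ2 : 2 ≤ δ2) (hcard1 : 4 ≤ Nat.card V1)
    (hκ : edgeConn G1 + 1 ≤ vertexConn G1 + edgeConn G2 ∨ edgeConn G2 + 1 ≤ vertexConn G1)
    {X : Set (V1 × V2)} (hX : X.Nonempty) (hXc : Xᶜ.Nonempty)
    (hXin : NoIsolatedIn (replacementProduct G1 G2 ℓ) X)
    (hXout : NoIsolatedIn (replacementProduct G1 G2 ℓ) Xᶜ) {x : V1}
    (hfe : ∀ y ≠ x, y ∈ fullClouds X ∨ y ∈ fullClouds Xᶜ) :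
    min (edgeConn G1) (2 * δ2) ≤ (edgeBoundary (replacementProduct G1 G2 ℓ) X).ncard := by
  have hcard2 : 2 ≤ Nat.card V2 := hδ2.trans (hr2 (Classical.arbitrary V2) ▸ Set.ncard_le_card _)
  have hfe' : ∀ y ≠ x, y ∈ fullClouds Xᶜ ∨ y ∈ fullClouds Xᶜᶜ := fun y hy => by
    rw [compl_compl]
    exact (hfe y hy).symm
  have hDc : Prod.mk x ⁻¹' Xᶜ = (Prod.mk x ⁻¹' X)ᶜ := Set.preimage_compl
  by_cases hD : (Prod.mk x ⁻¹' X).ncard ≤ 1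
  · exact min_le_of_left_le (edgeConn_le_of_ncard_fiber_le_one hrange hc2 hcard2 hX hXin hfe hD)
  by_cases hD' : (Prod.mk x ⁻¹' X)ᶜ.ncard ≤ 1
  · refine min_le_of_left_le ?_
    rw [← edgeBoundary_compl]
    exact edgeConn_le_of_ncard_fiber_le_one hrange hc2 hcard2 hXc hXout hfe' (hDc ▸ hD')
  have hd := two_mul_le_ncard_edgeBoundary_add_two_of_regular hr2 hopt hδ2
    (X := Prod.mk x ⁻¹' X) (by omega) (by omega)
  by_cases hW : ∀ y ≠ x, y ∈ fullClouds X
  · have := ncard_compl_fiber_add_le (G2 := G2) hinj hrange hW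
    exact min_le_of_right_le (by omega)
  by_cases hB : ∀ y ≠ x, y ∈ fullClouds Xᶜ
  · have := ncard_compl_fiber_add_le (G2 := G2) hinj hrange hB
    rw [hDc, compl_compl, edgeBoundary_compl, edgeBoundary_compl] at this
    exact min_le_of_right_le (by omega)
  push Not at hW hB
  obtain ⟨w, hwx, hw⟩ := hW
  obtain ⟨b, hbx, hb⟩ := hB
  exact min_le_ncard_edgeBoundary_of_fullClouds_nonempty hrange hr2 hopt hδ2 hcard1 hκ hfe
    (by omega) (by omega) ⟨b, (hfe b hbx).resolve_right hb⟩ ⟨w, (hfe w hwx).resolve_left hw⟩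

theorem min_le_ncard_edgeBoundary {δ2 : ℕ}
    (hinj : ∀ x, Function.Injective (ℓ x)) (hrange : ∀ x, Set.range (ℓ x) = G1.neighborSet x)
    (hc2 : G2.Connected) (hr2 : ∀ i, (G2.neighborSet i).ncard = δ2)
    (hopt : 2 * δ2 ≤ restrictedEdgeConn G2 + 2) (hδ2 : 2 ≤ δ2) (hcard1 : 4 ≤ Nat.card V1)
    (hκ : edgeConn G1 + 1 ≤ vertexConn G1 + edgeConn G2 ∨ edgeConn G2 + 1 ≤ vertexConn G1)
    {X : Set (V1 × V2)} (hX : X.Nonempty) (hXc : Xᶜ.Nonempty)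
    (hXin : NoIsolatedIn (replacementProduct G1 G2 ℓ) X)
    (hXout : NoIsolatedIn (replacementProduct G1 G2 ℓ) Xᶜ) :
    min (edgeConn G1) (2 * δ2) ≤ (edgeBoundary (replacementProduct G1 G2 ℓ) X).ncard := by
  by_cases h : ∃ x, ∀ y ≠ x, y ∈ fullClouds X ∨ y ∈ fullClouds Xᶜ
  · obtain ⟨x, hfe⟩ := h
    exact min_le_ncard_edgeBoundary_of_forall_ne hinj hrange hc2 hr2 hopt hδ2 hcard1 hκ hX hXc
      hXin hXout hfe
  push Not at h
  have hmixed : ∀ y, y ∉ fullClouds X → y ∉ fullClouds Xᶜ →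
      δ2 ≤ (edgeBoundary G2 (Prod.mk y ⁻¹' X)).ncard := by
    intro y hB hW
    simp only [fullClouds, Set.mem_ofPred_eq, Set.mem_compl_iff, not_forall, not_not] at hB hW
    exact le_ncard_edgeBoundary_of_regular hr2 hopt hδ2 hW hB
  obtain ⟨y, -, hyB, hyW⟩ := h hX.some.1
  obtain ⟨z, hzy, hzB, hzW⟩ := h y
  have := ncard_edgeBoundary_fiber_add_fiber_le (G1 := G1) (G2 := G2) (ℓ := ℓ) X hzy
  have := hmixed y hyB hyW
  have := hmixed z hzB hzW
  exact min_le_of_right_le (by omega)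

theorem exists_isRestrictedEdgeCut_ncard_le [Nonempty V1] {δ2 : ℕ}
    (hinj : ∀ x, Function.Injective (ℓ x)) (hrange : ∀ x, Set.range (ℓ x) = G1.neighborSet x)
    (hr2 : ∀ i, (G2.neighborSet i).ncard = δ2) (hdeg : ∀ i, ∃ j, G2.Adj i j)
    (hcard : 3 ≤ Nat.card V2) :
    ∃ F, IsRestrictedEdgeCut (replacementProduct G1 G2 ℓ) F ∧ F.ncard ≤ 2 * δ2 := by
  obtain ⟨x⟩ := ‹Nonempty V1›
  obtain ⟨i⟩ := ‹Nonempty V2›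
  obtain ⟨j, hij⟩ := hdeg i
  set X : Set (V1 × V2) := {(x, i), (x, j)}
  have hfst : ∀ p ∈ X, p.1 = x := by rintro _ (rfl | rfl) <;> rfl
  obtain ⟨k, hk⟩ : ({i, j} : Set V2)ᶜ.Nonempty := Set.nonempty_compl.2 fun h => by
    have := Set.ncard_insert_le i {j}
    rw [h, Set.ncard_univ, Set.ncard_singleton] at this
    omega
  have hout : NoIsolatedIn (replacementProduct G1 G2 ℓ) Xᶜ := by
    rintro ⟨y, k⟩ hyk
    by_cases hy : y = x
    · subst hy
      have hadj : G1.Adj y (ℓ y k) := (hrange y).subset (Set.mem_range_self k)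
      refine ⟨(ℓ y k, label ℓ (ℓ y k) y), fun h => hadj.ne (hfst _ h).symm, ?_⟩
      simpa only [label_apply hinj] using adj_label (G2 := G2) hrange hadj
    · obtain ⟨k', hk'⟩ := hdeg k
      exact ⟨(y, k'), fun h => hy (hfst _ h), Or.inl ⟨rfl, hk'⟩⟩
  have hcut := isRestrictedEdgeCut_edgeBoundary (X := X) ⟨_, Or.inl rfl⟩
    ⟨(x, k), fun h => hk (h.imp (fun h => (Prod.mk.inj h).2) (fun h => (Prod.mk.inj h).2))⟩
    (by rintro _ (rfl | rfl)
        exacts [⟨_, Or.inr rfl, Or.inl ⟨rfl, hij⟩⟩, ⟨_, Or.inl rfl, Or.inl ⟨rfl, hij.symm⟩⟩])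
    hout
  refine ⟨_, hcut, ?_⟩
  have : (edgeBoundary _ X).ncard + 2 ≤ _ :=
    ncard_edgeBoundary_pair_add_two_le (G := replacementProduct G1 G2 ℓ) (Or.inl ⟨rfl, hij⟩)
  have := ncard_neighborSet_le (G1 := G1) hinj hr2 x i
  have := ncard_neighborSet_le (G1 := G1) hinj hr2 x j
  omega

end Finite

theorem restrictedEdgeConn_le_edgeConn [Finite V1] [Nontrivial V1]
    (hinj : ∀ x, Function.Injective (ℓ x))
    (hdeg : ∀ i, ∃ j, G2.Adj i j) :
    restrictedEdgeConn (replacementProduct G1 G2 ℓ) ≤ edgeConn G1 := by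
  obtain ⟨A, hA, hAc, hle⟩ := exists_ncard_edgeBoundary_le_edgeConn (G := G1)
  have hne : ∀ B : Set V1, B.Nonempty → (Prod.fst ⁻¹' B : Set (V1 × V2)).Nonempty :=
    fun B ⟨x, hx⟩ => ⟨(x, Classical.arbitrary V2), hx⟩
  calc restrictedEdgeConn (replacementProduct G1 G2 ℓ)
      ≤ (edgeBoundary (replacementProduct G1 G2 ℓ) (Prod.fst ⁻¹' A)).ncard :=
        restrictedEdgeConn_le_ncard_edgeBoundary (hne A hA) (hne Aᶜ hAc)
          (noIsolatedIn_preimage_fst hdeg A) (noIsolatedIn_preimage_fst hdeg Aᶜ)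
    _ ≤ (liftEdge ℓ '' edgeBoundary G1 A).ncard :=
        Set.ncard_le_ncard (edgeBoundary_preimage_fst_subset hinj A)
    _ ≤ edgeConn G1 := (Set.ncard_image_le (Set.toFinite _)).trans hle

end replacementProduct

theorem restrictedEdgeConn_replacementProduct_eq_of_optimal_general
    {V1 V2 : Type*} [Fintype V1] [Fintype V2] {δ1 δ2 : ℕ}
    (G1 : SimpleGraph V1) (G2 : SimpleGraph V2) (ℓ : V1 → V2 → V1)
    (hℓ : IsRPLabelling G1 ℓ)
    (hc1 : G1.Connected) (hc2 : G2.Connected)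
    (hr1 : ∀ x : V1, (G1.neighborSet x).ncard = δ1)
    (hr2 : ∀ i : V2, (G2.neighborSet i).ncard = δ2)
    (hd : Fintype.card V2 = δ1)
    (hδ1 : 4 ≤ δ1)
    (hopt : LambdaPrimeOptimal G2)
    (hκ : edgeConn G1 + 1 ≤ vertexConn G1 + edgeConn G2 ∨
      edgeConn G2 + 1 ≤ vertexConn G1) :
    restrictedEdgeConn (replacementProduct G1 G2 ℓ) = min (edgeConn G1) (2 * δ2) := by
  rw [← Nat.card_eq_fintype_card] at hd
  have : Nonempty V1 := hc1.nonempty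
  have : Nonempty V2 := Nat.card_pos_iff.1 (by omega) |>.1
  have hcard1 : δ1 < Nat.card V1 := hr1 (Classical.arbitrary V1) ▸ ncard_neighborSet_lt_card _
  have : Nontrivial V1 := Finite.one_lt_card_iff_nontrivial.1 (by omega)
  have hrange := replacementProduct.range_eq_neighborSet hℓ fun x => (hr1 x).trans hd.symm
  have hδ2 : 2 ≤ δ2 := two_le_of_regular hr2 hc2 (by omega)
  have hdeg : ∀ i, ∃ j, G2.Adj i j := fun i =>
    Set.nonempty_of_ncard_ne_zero (by rw [hr2]; omega : (G2.neighborSet i).ncard ≠ 0)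
  obtain ⟨j, hj⟩ := hdeg (Classical.arbitrary V2)
  have hopt' : 2 * δ2 ≤ restrictedEdgeConn G2 + 2 :=
    (hopt ▸ minEdgeDegree_add_two_of_regular hr2 hj).ge
  obtain ⟨F, hF, hFcard⟩ :=
    replacementProduct.exists_isRestrictedEdgeCut_ncard_le hℓ.1 hrange hr2 hdeg (by omega)
  have hcut : restrictedEdgeConn (replacementProduct G1 G2 ℓ) ≤ F.ncard :=
    Nat.sInf_le ⟨F, hF, rfl⟩
  refine le_antisymm (le_min (replacementProduct.restrictedEdgeConn_le_edgeConn hℓ.1 hdeg)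
    (hcut.trans hFcard)) ?_
  exact le_restrictedEdgeConn ⟨F, hF⟩ fun X hX hXc hin hout =>
    replacementProduct.min_le_ncard_edgeBoundary hℓ.1 hrange hc2 hr2 hopt' hδ2 (by omega) hκ
      hX hXc hin hout

/-- Theorem 4.4, equality (4.8). Let `G1` be a connected `δ1`-regular
graph on `n` vertices with `δ1 ≥ 4` and `G2` a connected `δ2`-regular graph on `δ1`
vertices. If `G2` is `λ'`-optimal and either `κ1 ≥ λ1 - λ2 + 1` (i.e. `κ1 + λ2 ≥ λ1 + 1`)
or `κ1 ≥ λ2 + 1`, then `λ'(G1 ® G2) = min {λ1, 2·δ2}`. -/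
theorem restrictedEdgeConn_replacementProduct_eq_of_optimal
    {V1 V2 : Type*} [Fintype V1] [Fintype V2] {n δ1 δ2 : ℕ}
    (G1 : SimpleGraph V1) (G2 : SimpleGraph V2) (ℓ : V1 → V2 → V1)
    (hℓ : IsRPLabelling G1 ℓ)
    (hc1 : G1.Connected) (hc2 : G2.Connected)
    (hr1 : ∀ x : V1, (G1.neighborSet x).ncard = δ1)
    (hr2 : ∀ i : V2, (G2.neighborSet i).ncard = δ2)
    (hn : Fintype.card V1 = n) (hd : Fintype.card V2 = δ1)
    (hδ1 : 4 ≤ δ1)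
    (hopt : LambdaPrimeOptimal G2)
    (hκ : edgeConn G1 + 1 ≤ vertexConn G1 + edgeConn G2 ∨
      edgeConn G2 + 1 ≤ vertexConn G1) :
    restrictedEdgeConn (replacementProduct G1 G2 ℓ) = min (edgeConn G1) (2 * δ2) :=
  restrictedEdgeConn_replacementProduct_eq_of_optimal_general G1 G2 ℓ hℓ hc1 hc2 hr1 hr2 hd hδ1 hopt
    hκ
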